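/- Let γ be a mapping from the set of nontrivial, surjective, monotone (j,2) games on n players to the standard simplex Δ_n satisfying the transfer axiom γ(u) + γ(w) = γ(u∨w) + γ(u∧w) whenever all four games are nontrivial surjective monotone (j,2) games. Then γ is uniquely determined by its values on games with a unique minimal winning vector; concretely, if v has minimal winning vectors a¹,…,aˡ with l ≥ 2, then γ(v) = γ(x) + γ(u_{aˡ}) − γ(x ∧ u_{aˡ}) where x = u_{a¹} ∨ ⋯ ∨ u_{a^{l−1}} and u_a denotes the game with unique minimal winning vector a, and x ∧ u_{aˡ} has at most l−1 minimal winning vectors. -/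

import Mathlib

/-!
A monotone game is the join of the games `u_a` over its minimal winning vectors `a`, so
`v = x ∨ u_{a0}` and the formula is the transfer axiom for `x` and `u_{a0}`. All four games
involved are nontrivial: each lies below `v`, hence has a losing vector, and each has a
winning vector because `l ≥ 2`. Since `u_c ∧ u_{a0} = u_{c ⊔ a0}`, the meet `x ∧ u_{a0}` is the
join of the `l - 1` games `u_{c ⊔ a0}`, `c ≠ a0`, and its minimal winning vectors are among
these `c ⊔ a0`.
-/

open Finset

/-- `(j,2)` games: inputs in `{1,…,j}` encoded as `Fin j`, outputs in `{1,2}` encoded as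
`Fin 2` (`losing ↦ 0`, `winning ↦ 1`). A nontrivial surjective monotone `(j,2)` game: -/
def Good {n j : ℕ} (v : (Fin n → Fin j) → Fin 2) : Prop :=
  Monotone v ∧ Function.Surjective v

instance {n j : ℕ} : DecidableRel ((· ≤ ·) : (Fin n → Fin j) → (Fin n → Fin j) → Prop) :=
  fun a b => decidable_of_iff (∀ l, a l ≤ b l) Iff.rfl

/-- `a` is a minimal winning vector of `v`. -/
def MinWinning {n j : ℕ} (v : (Fin n → Fin j) → Fin 2) (a : Fin n → Fin j) : Prop :=
  v a = 1 ∧ ∀ b : Fin n → Fin j, b < a → v b = 0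

instance {n j : ℕ} : DecidableRel ((· < ·) : (Fin n → Fin j) → (Fin n → Fin j) → Prop) :=
  fun a b => decidable_of_iff (a ≤ b ∧ ¬b ≤ a) lt_iff_le_not_ge.symm

instance {n j : ℕ} (v : (Fin n → Fin j) → Fin 2) (a : Fin n → Fin j) :
    Decidable (MinWinning v a) := by
  unfold MinWinning; infer_instance

/-- The game `u_a` with unique minimal winning vector `a`. -/
def ua {n j : ℕ} (a : Fin n → Fin j) : (Fin n → Fin j) → Fin 2 :=
  fun b => if a ≤ b then 1 else 0

lemma Fin.two_eq_of_eq_one_iff {x y : Fin 2} (h : x = 1 ↔ y = 1) : x = y := by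
  revert x y; decide

lemma Fin.two_eq_zero_of_ne_one {x : Fin 2} (h : x ≠ 1) : x = 0 := by
  revert x; decide

lemma Fin.two_max_eq_one {x y : Fin 2} : max x y = 1 ↔ x = 1 ∨ y = 1 := by
  revert x y; decide

lemma Fin.two_min_eq_one {x y : Fin 2} : min x y = 1 ↔ x = 1 ∧ y = 1 := by
  revert x y; decide

section UpGame

variable {α : Type*} [Preorder α] [DecidableRel ((· ≤ ·) : α → α → Prop)]

/-- The paper's `⋁_{c ∈ S} u_c`. -/
def upGame (S : Finset α) (b : α) : Fin 2 :=
  if ∃ c ∈ S, c ≤ b then 1 else 0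

lemma upGame_eq_one {S : Finset α} {b : α} : upGame S b = 1 ↔ ∃ c ∈ S, c ≤ b := by
  unfold upGame; split_ifs <;> simp_all

lemma upGame_mono {S T : Finset α} (hST : S ⊆ T) {b b' : α} (hbb' : b ≤ b') :
    upGame S b ≤ upGame T b' := by
  by_cases h : upGame S b = 1
  · obtain ⟨c, hc, hcb⟩ := upGame_eq_one.1 h
    rw [h, upGame_eq_one.2 ⟨c, hST hc, hcb.trans hbb'⟩]
  · rw [Fin.two_eq_zero_of_ne_one h]
    exact Fin.zero_le _

lemma monotone_upGame (S : Finset α) : Monotone (upGame S) :=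
  fun _ _ => upGame_mono subset_rfl

lemma upGame_le_upGame {S T : Finset α} (hST : S ⊆ T) : upGame S ≤ upGame T :=
  fun _ => upGame_mono hST le_rfl

lemma max_upGame [DecidableEq α] (S T : Finset α) :
    (fun b => max (upGame S b) (upGame T b)) = upGame (S ∪ T) := by
  funext b
  refine Fin.two_eq_of_eq_one_iff ?_
  simp only [Fin.two_max_eq_one, upGame_eq_one, Finset.mem_union, or_and_right, exists_or]

end UpGame

section UpGameSup

variable {α : Type*} [SemilatticeSup α] [DecidableRel ((· ≤ ·) : α → α → Prop)] [DecidableEq α]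

lemma min_upGame (S T : Finset α) :
    (fun b => min (upGame S b) (upGame T b)) = upGame (Finset.image₂ (· ⊔ ·) S T) := by
  funext b
  refine Fin.two_eq_of_eq_one_iff ?_
  simp only [Fin.two_min_eq_one, upGame_eq_one, Finset.exists_mem_image₂, sup_le_iff]
  constructor
  · rintro ⟨⟨c, hc, hcb⟩, d, hd, hdb⟩
    exact ⟨c, hc, d, hd, hcb, hdb⟩
  · rintro ⟨c, hc, d, hd, hcb, hdb⟩
    exact ⟨⟨c, hc, hcb⟩, d, hd, hdb⟩

end UpGameSup

section Games

variable {n j : ℕ}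

lemma good_iff {v : (Fin n → Fin j) → Fin 2} :
    Good v ↔ Monotone v ∧ (∃ b, v b = 0) ∧ ∃ b, v b = 1 := by
  simp only [Good, Function.Surjective, Fin.forall_fin_two, eq_comm]

lemma Good.of_le {v w : (Fin n → Fin j) → Fin 2} (hv : Good v) (hw : Monotone w) (hwv : w ≤ v)
    (hwin : ∃ b, w b = 1) : Good w := by
  obtain ⟨-, ⟨b, hb⟩, -⟩ := good_iff.1 hv
  exact good_iff.2 ⟨hw, ⟨b, nonpos_iff_eq_zero.1 (hb ▸ hwv b)⟩, hwin⟩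

lemma ua_eq_upGame (a : Fin n → Fin j) : ua a = upGame {a} := by
  funext b
  simp [ua, upGame]

lemma exists_minWinning_le {v : (Fin n → Fin j) → Fin 2} {b : Fin n → Fin j} (hb : v b = 1) :
    ∃ c ≤ b, MinWinning v c := by
  obtain ⟨c, hcb, hc, hmin⟩ := exists_minimal_le_of_wellFoundedLT (v · = 1) b hb
  exact ⟨c, hcb, hc, fun d hdc => Fin.two_eq_zero_of_ne_one fun hd => (hdc.not_ge (hmin hd hdc.le))⟩

lemma eq_upGame_of_minWinning {v : (Fin n → Fin j) → Fin 2} (hv : Monotone v)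
    {A : Finset (Fin n → Fin j)} (hA : ∀ a, MinWinning v a ↔ a ∈ A) : v = upGame A := by
  funext b
  refine Fin.two_eq_of_eq_one_iff ⟨fun hb => ?_, fun hb => ?_⟩
  · obtain ⟨c, hcb, hc⟩ := exists_minWinning_le hb
    exact upGame_eq_one.2 ⟨c, (hA c).1 hc, hcb⟩
  · obtain ⟨c, hc, hcb⟩ := upGame_eq_one.1 hb
    exact le_antisymm (Fin.le_last _) (((hA c).2 hc).1 ▸ hv hcb)

lemma mem_of_minWinning_upGame {S : Finset (Fin n → Fin j)} {a : Fin n → Fin j}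
    (ha : MinWinning (upGame S) a) : a ∈ S := by
  obtain ⟨c, hc, hca⟩ := upGame_eq_one.1 ha.1
  obtain rfl | hlt := hca.eq_or_lt
  · exact hc
  · exact absurd (ha.2 c hlt) (by simp [upGame_eq_one.2 ⟨c, hc, le_rfl⟩])

lemma card_minWinning_upGame_le (S : Finset (Fin n → Fin j)) :
    (Finset.univ.filter (MinWinning (upGame S))).card ≤ S.card :=
  Finset.card_le_card fun _ ha => mem_of_minWinning_upGame (Finset.mem_filter.1 ha).2

end Games

theorem transfer_recursion_general {n j : ℕ}
    (γ : ((Fin n → Fin j) → Fin 2) → (Fin n → ℝ))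
    (htransfer : ∀ u w : (Fin n → Fin j) → Fin 2, Good u → Good w →
      Good (fun b => max (u b) (w b)) → Good (fun b => min (u b) (w b)) →
      ∀ i, γ u i + γ w i =
        γ (fun b => max (u b) (w b)) i + γ (fun b => min (u b) (w b)) i)
    (v : (Fin n → Fin j) → Fin 2) (hv : Good v)
    (A : Finset (Fin n → Fin j)) (hA : ∀ a, MinWinning v a ↔ a ∈ A)
    (hcard : 2 ≤ A.card) (a0 : Fin n → Fin j) (ha0 : a0 ∈ A) :
    (∀ i, γ v i =
        γ (fun b => if ∃ c ∈ A.erase a0, c ≤ b then 1 else 0) i + γ (ua a0) i -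
          γ (fun b =>
              min ((fun b => if ∃ c ∈ A.erase a0, c ≤ b then (1 : Fin 2) else 0) b)
                (ua a0 b)) i) ∧
      ((Finset.univ : Finset (Fin n → Fin j)).filter
          (fun a => MinWinning (fun b =>
            min ((fun b => if ∃ c ∈ A.erase a0, c ≤ b then (1 : Fin 2) else 0) b)
              (ua a0 b)) a)).card ≤ A.card - 1 := by
  set x := upGame (A.erase a0)
  change (∀ i, γ v i = γ x i + γ (ua a0) i - γ (fun b => min (x b) (ua a0 b)) i) ∧
    (Finset.univ.filter (MinWinning fun b => min (x b) (ua a0 b))).card ≤ A.card - 1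
  rw [ua_eq_upGame]
  set u := upGame {a0}
  have hvA : v = upGame A := eq_upGame_of_minWinning hv.1 hA
  have hmax : (fun b => max (x b) (u b)) = v := by
    rw [hvA, max_upGame, Finset.erase_union_eq a0 A ha0]
  have hmin : (fun b => min (x b) (u b)) = upGame ((A.erase a0).image (· ⊔ a0)) := by
    rw [min_upGame, Finset.image₂_singleton_right]
  obtain ⟨c, hc⟩ : (A.erase a0).Nonempty := by
    rw [← Finset.card_pos, Finset.card_erase_of_mem ha0]; omega
  have hx : Good x :=
    hv.of_le (monotone_upGame _) (hvA ▸ upGame_le_upGame (A.erase_subset a0))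
      ⟨c, upGame_eq_one.2 ⟨c, hc, le_rfl⟩⟩
  have hu : Good u :=
    hv.of_le (monotone_upGame _) (hvA ▸ upGame_le_upGame (Finset.singleton_subset_iff.2 ha0))
      ⟨a0, upGame_eq_one.2 ⟨a0, Finset.mem_singleton_self a0, le_rfl⟩⟩
  have hm : Good fun b => min (x b) (u b) :=
    hx.of_le (hx.1.min hu.1) (fun b => min_le_left _ _)
      ⟨c ⊔ a0, congrFun hmin _ ▸ upGame_eq_one.2 ⟨c ⊔ a0, Finset.mem_image_of_mem _ hc, le_rfl⟩⟩
  refine ⟨fun i => ?_, ?_⟩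
  · have := htransfer x u hx hu (hmax ▸ hv) hm i
    rw [hmax] at this
    linarith
  · calc _ ≤ ((A.erase a0).image (· ⊔ a0)).card := hmin ▸ card_minWinning_upGame_le _
      _ ≤ (A.erase a0).card := Finset.card_image_le
      _ = A.card - 1 := Finset.card_erase_of_mem ha0

/-- The recursion step: a simplex-valued mapping `γ` on nontrivial surjective monotone
`(j,2)` games satisfying the transfer axiom is determined by its values on games with a
unique minimal winning vector.  Concretely, if the minimal winning vectors of `v` form
the set `A` with `|A| = l ≥ 2` and `a0 ∈ A`, then with
`x = ⋁_{c ∈ A ∖ {a0}} u_c` one has `γ(v) = γ(x) + γ(u_{a0}) − γ(x ∧ u_{a0})`, and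
`x ∧ u_{a0}` has at most `l − 1` minimal winning vectors. -/
theorem transfer_recursion {n j : ℕ} (hj : 2 ≤ j)
    (γ : ((Fin n → Fin j) → Fin 2) → (Fin n → ℝ))
    (hsimplex : ∀ v : (Fin n → Fin j) → Fin 2, Good v →
      (∀ i, γ v i ∈ Set.Icc (0 : ℝ) 1) ∧ ∑ i, γ v i = 1)
    (htransfer : ∀ u w : (Fin n → Fin j) → Fin 2, Good u → Good w →
      Good (fun b => max (u b) (w b)) → Good (fun b => min (u b) (w b)) →
      ∀ i, γ u i + γ w i =
        γ (fun b => max (u b) (w b)) i + γ (fun b => min (u b) (w b)) i)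
    (v : (Fin n → Fin j) → Fin 2) (hv : Good v)
    (A : Finset (Fin n → Fin j)) (hA : ∀ a, MinWinning v a ↔ a ∈ A)
    (hcard : 2 ≤ A.card) (a0 : Fin n → Fin j) (ha0 : a0 ∈ A) :
    (∀ i, γ v i =
        γ (fun b => if ∃ c ∈ A.erase a0, c ≤ b then 1 else 0) i + γ (ua a0) i -
          γ (fun b =>
              min ((fun b => if ∃ c ∈ A.erase a0, c ≤ b then (1 : Fin 2) else 0) b)
                (ua a0 b)) i) ∧
      ((Finset.univ : Finset (Fin n → Fin j)).filter
          (fun a => MinWinning (fun b =>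
            min ((fun b => if ∃ c ∈ A.erase a0, c ≤ b then (1 : Fin 2) else 0) b)
              (ua a0 b)) a)).card ≤ A.card - 1 :=
  transfer_recursion_general γ htransfer v hv A hA hcard a0 ha0
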